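/- arXiv:1208.0620 — 2 statements merged into one kernel-verified Lean document; each statement's English description precedes it below -/
import Mathlib

section
/- Let p > 0, q = ν - p, h(x) = x^{2p} (log x)^ν, f(x) = x^p (log x)^q, and g(x) = x^{2p-2} (log x)^{ν-1}. Then liminf_{x→∞} g(x) / f'(f⁻¹(h(x))) > 0. -/
/-!
Write `u = f⁻¹(h(x))`, `X = log x`, `L = log u` and `q = ν - p`. Taking logarithms in
`f(u) = h(x)` gives `p L + q log L = 2p X + ν log X`, hence `L / X → 2`, and then
`(u / (x² X))^p = (X / L)^q → 2^{-q}`. Since `f'(u) = u^{p-1} L^{q-1} (p L + q)`, the same identity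
turns `g(x) / f'(u)` into `u / (x² X) · L / (p L + q)`, which tends to `2^{-q/p} / p > 0`.
-/

open Real Filter Topology

lemma log_rpow_mul_log_rpow {x : ℝ} (hx : 1 < x) (a b : ℝ) :
    log (x ^ a * log x ^ b) = a * log x + b * log (log x) := by
  have hlog : 0 < log x := log_pos hx
  rw [log_mul (by positivity) (by positivity), log_rpow (by positivity), log_rpow hlog]

lemma hasDerivAt_rpow_mul_log_rpow (p q : ℝ) {u : ℝ} (hu : 1 < u) :
    HasDerivAt (fun y => y ^ p * log y ^ q)
      (u ^ (p - 1) * log u ^ (q - 1) * (p * log u + q)) u := by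
  have hu0 : u ≠ 0 := by positivity
  have hL : log u ≠ 0 := (log_pos hu).ne'
  refine ((hasDerivAt_rpow_const (p := p) (Or.inl hu0)).mul
    ((hasDerivAt_log hu0).rpow_const (p := q) (Or.inl hL))).congr_deriv ?_
  rw [rpow_sub_one hu0, rpow_sub_one hL]
  field_simp

section RpowMulLogRpowEq

variable {p ν x u : ℝ}

lemma div_sq_mul_log_eq_of_rpow_mul_log_rpow_eq (hp : 0 < p) (hx : 1 < x) (hu : 1 < u)
    (hfu : u ^ p * log u ^ (ν - p) = x ^ (2 * p) * log x ^ ν) :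
    u / (x ^ 2 * log x) = ((log x / log u) ^ (ν - p)) ^ p⁻¹ := by
  have hX : 0 < log x := log_pos hx
  have hL : 0 < log u := log_pos hu
  have hx0 : 0 < x := by linarith
  rw [← rpow_rpow_inv (by positivity : 0 ≤ u / (x ^ 2 * log x)) hp.ne']
  congr 1
  rw [div_rpow hX.le hL.le, div_rpow (by positivity) (by positivity),
    mul_rpow (by positivity) hX.le, ← rpow_natCast, ← rpow_mul hx0.le, eq_div_iff (by positivity),
    div_mul_eq_mul_div, div_eq_iff (by positivity), hfu, rpow_sub hX]
  push_cast
  field_simp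

lemma div_deriv_eq_of_rpow_mul_log_rpow_eq (hx : 1 < x) (hu : 1 < u)
    (hfu : u ^ p * log u ^ (ν - p) = x ^ (2 * p) * log x ^ ν) :
    x ^ (2 * p - 2) * log x ^ (ν - 1) /
        (u ^ (p - 1) * log u ^ (ν - p - 1) * (p * log u + (ν - p)))
      = u / (x ^ 2 * log x) * (log u / (p * log u + (ν - p))) := by
  have hX : 0 < log x := log_pos hx
  have hL : 0 < log u := log_pos hu
  have hx0 : 0 < x := by linarith
  have hu0 : 0 < u := by linarith
  rw [rpow_sub hx0, rpow_two, rpow_sub_one hX.ne', rpow_sub_one hu0.ne', rpow_sub_one hL.ne']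
  field_simp
  rw [← hfu]

end RpowMulLogRpowEq

section LogDivSelf

variable {α : Type*} {l : Filter α}

lemma Filter.Tendsto.log_div_self {X : α → ℝ} (hX : Tendsto X l atTop) :
    Tendsto (fun t => Real.log (X t) / X t) l (𝓝 0) :=
  isLittleO_log_id_atTop.tendsto_div_nhds_zero.comp hX

lemma Filter.Tendsto.mul_add_mul_log_atTop {X : α → ℝ} {a : ℝ} (ha : 0 < a) (b : ℝ)
    (hX : Tendsto X l atTop) : Tendsto (fun t => a * X t + b * Real.log (X t)) l atTop := by
  have hlim : Tendsto (fun t => a + b * (Real.log (X t) / X t)) l (𝓝 a) := by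
    simpa using (hX.log_div_self.const_mul b).const_add a
  refine (hX.atTop_mul_pos ha hlim).congr' ?_
  filter_upwards [hX.eventually_ne_atTop 0] with t ht
  field_simp

lemma Filter.Tendsto.div_of_mul_add_mul_log_eq {X L : α → ℝ} {a b c d : ℝ} (ha : a ≠ 0)
    (hX : Tendsto X l atTop) (hL : Tendsto L l atTop)
    (h : ∀ᶠ t in l, a * L t + b * Real.log (L t) = c * X t + d * Real.log (X t)) :
    Tendsto (fun t => L t / X t) l (𝓝 (c / a)) := by
  have hnum := (hX.log_div_self.const_mul d).const_add c
  have hden := (hL.log_div_self.const_mul b).const_add a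
  simp only [mul_zero, add_zero] at hnum hden
  refine (hnum.div hden ha).congr' ?_
  filter_upwards [h, hden.eventually_ne ha, hX.eventually_gt_atTop 0, hL.eventually_gt_atTop 0]
    with t ht hne hXt hLt
  simp only [Pi.div_apply]
  rw [div_eq_div_iff hne hXt.ne']
  field_simp
  linear_combination -ht

end LogDivSelf

lemma tendsto_rpow_mul_log_rpow_atTop {a : ℝ} (ha : 0 < a) (b : ℝ) :
    Tendsto (fun x : ℝ => x ^ a * log x ^ b) atTop atTop := by
  refine (tendsto_exp_atTop.comp (tendsto_log_atTop.mul_add_mul_log_atTop ha b)).congr' ?_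
  filter_upwards [eventually_gt_atTop 1] with x hx
  have hlog : 0 < log x := log_pos hx
  rw [Function.comp_apply, ← log_rpow_mul_log_rpow hx, exp_log (by positivity)]

section TendstoOfRpowMulLogRpowEq

variable {α : Type*} {l : Filter α} {p ν : ℝ} {x u : α → ℝ}

lemma tendsto_log_div_log_of_rpow_mul_log_rpow_eq (hp : 0 < p) (hx : Tendsto x l atTop)
    (hu : Tendsto u l atTop)
    (hfu : ∀ᶠ t in l, u t ^ p * log (u t) ^ (ν - p) = x t ^ (2 * p) * log (x t) ^ ν) :
    Tendsto (fun t => log (u t) / log (x t)) l (𝓝 2) := by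
  have h := (tendsto_log_atTop.comp hx).div_of_mul_add_mul_log_eq hp.ne'
    (tendsto_log_atTop.comp hu) (b := ν - p) (c := 2 * p) (d := ν) ?_
  · rwa [mul_div_cancel_right₀ 2 hp.ne'] at h
  filter_upwards [hfu, hx.eventually_gt_atTop 1, hu.eventually_gt_atTop 1] with t ht hxt hut
  simpa only [Function.comp_apply, log_rpow_mul_log_rpow hxt, log_rpow_mul_log_rpow hut]
    using congrArg log ht

lemma tendsto_div_sq_mul_log_of_rpow_mul_log_rpow_eq (hp : 0 < p) (hx : Tendsto x l atTop)
    (hu : Tendsto u l atTop)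
    (hfu : ∀ᶠ t in l, u t ^ p * log (u t) ^ (ν - p) = x t ^ (2 * p) * log (x t) ^ ν) :
    Tendsto (fun t => u t / (x t ^ 2 * log (x t))) l (𝓝 ((2⁻¹ ^ (ν - p)) ^ p⁻¹)) := by
  have hXL : Tendsto (fun t => log (x t) / log (u t)) l (𝓝 2⁻¹) := by
    simpa only [inv_div] using
      (tendsto_log_div_log_of_rpow_mul_log_rpow_eq hp hx hu hfu).inv₀ two_ne_zero
  refine ((hXL.rpow_const (Or.inl (by norm_num))).rpow_const (Or.inl (by positivity))).congr' ?_
  filter_upwards [hfu, hx.eventually_gt_atTop 1, hu.eventually_gt_atTop 1] with t ht hxt hut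
  exact (div_sq_mul_log_eq_of_rpow_mul_log_rpow_eq hp hxt hut ht).symm

lemma tendsto_div_deriv_of_rpow_mul_log_rpow_eq (hp : 0 < p) (hx : Tendsto x l atTop)
    (hu : Tendsto u l atTop)
    (hfu : ∀ᶠ t in l, u t ^ p * log (u t) ^ (ν - p) = x t ^ (2 * p) * log (x t) ^ ν) :
    Tendsto (fun t => x t ^ (2 * p - 2) * log (x t) ^ (ν - 1) /
        deriv (fun y => y ^ p * log y ^ (ν - p)) (u t)) l
      (𝓝 ((2⁻¹ ^ (ν - p)) ^ p⁻¹ * p⁻¹)) := by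
  have hL : Tendsto (fun t => log (u t)) l atTop := tendsto_log_atTop.comp hu
  have hLfrac : Tendsto (fun t => log (u t) / (p * log (u t) + (ν - p))) l (𝓝 p⁻¹) := by
    have h := ((tendsto_const_nhds (x := ν - p)).div_atTop hL).const_add p
      |>.inv₀ (by simpa using hp.ne')
    rw [add_zero] at h
    refine h.congr' ?_
    filter_upwards [hL.eventually_gt_atTop 0] with t ht
    field_simp
  refine ((tendsto_div_sq_mul_log_of_rpow_mul_log_rpow_eq hp hx hu hfu).mul hLfrac).congr' ?_
  filter_upwards [hfu, hx.eventually_gt_atTop 1, hu.eventually_gt_atTop 1] with t ht hxt hut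
  rw [(hasDerivAt_rpow_mul_log_rpow p (ν - p) hut).deriv,
    div_deriv_eq_of_rpow_mul_log_rpow_eq hxt hut ht]

end TendstoOfRpowMulLogRpowEq

/-- Let `p > 0`, `q = ν - p`, `h(x) = x^{2p} (log x)^ν`, `f(x) = x^p (log x)^q`,
`g(x) = x^{2p-2} (log x)^{ν-1}`.  For any branch `finv` of the inverse of `f` near
infinity (i.e. `f (finv x) = x` eventually and `finv → ∞`),
`liminf_{x→∞} g(x) / f'(finv(h(x))) > 0`. -/
theorem liminf_g_div_fprime_pos (p ν : ℝ) (hp : 0 < p) (finv : ℝ → ℝ)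
    (hfinv_inv : ∀ᶠ x in atTop, (finv x) ^ p * Real.log (finv x) ^ (ν - p) = x)
    (hfinv_top : Tendsto finv atTop atTop) :
    0 < Filter.liminf
      (fun x : ℝ =>
        (x ^ (2 * p - 2) * Real.log x ^ (ν - 1)) /
          deriv (fun y => y ^ p * Real.log y ^ (ν - p))
            (finv (x ^ (2 * p) * Real.log x ^ ν)))
      atTop := by
  have hh := tendsto_rpow_mul_log_rpow_atTop (by positivity : 0 < 2 * p) ν
  rw [(tendsto_div_deriv_of_rpow_mul_log_rpow_eq (x := fun x => x)
    (u := fun x => finv (x ^ (2 * p) * log x ^ ν)) hp tendsto_id (hfinv_top.comp hh)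
    (hh.eventually hfinv_inv)).liminf_eq]
  positivity
end

section
/- Let ζ₁, ζ₂, … be i.i.d. nonnegative random variables such that liminf_{x→∞} x^θ (log x)^{-φ} P[ζ₁ ≥ x] > 0 for some θ > 0 and φ ∈ ℝ. Then for any ε > 0, almost surely, ∑_{i=1}^n ζᵢ ≥ n^{1/θ} (log n)^{(φ-1)/θ - ε} for all but finitely many n. -/
/-!
Put `a n = n ^ (1/θ) (log n) ^ ((φ - 1)/θ - ε)`. Since `log (a n) ~ (log n)/θ`, the tail bound
gives `P[ζ₁ ≥ a n] ≥ 2 log n / n` for large `n`, so the probability that all of `ζ₁, …, ζₙ` stay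
below `a n` is at most `(1 - 2 log n / n) ^ n ≤ n⁻²`. By Borel–Cantelli, almost surely
`max_{i ≤ n} ζᵢ ≥ a n` for all large `n`, and the sum of nonnegative terms dominates the maximum.
-/

open Real Filter MeasureTheory ProbabilityTheory Topology

namespace Real

theorem tendsto_log_rpow_mul_log_rpow_div_log (p q : ℝ) :
    Tendsto (fun x => log (x ^ p * log x ^ q) / log x) atTop (𝓝 p) := by
  have hloglog : Tendsto (fun x => log (log x) / log x) atTop (𝓝 0) := by
    have := (tendsto_pow_log_div_mul_add_atTop 1 0 1 one_ne_zero).comp tendsto_log_atTop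
    simpa [Function.comp_def] using this
  refine (by simpa using hloglog.const_mul q |>.const_add p :
    Tendsto (fun x => p + q * (log (log x) / log x)) atTop (𝓝 p)).congr' ?_
  filter_upwards [tendsto_log_atTop.eventually_gt_atTop 0, eventually_gt_atTop 0] with x hL hx
  rw [log_mul (rpow_pos_of_pos hx p).ne' (rpow_pos_of_pos hL q).ne', log_rpow hx, log_rpow hL]
  field_simp

theorem tendsto_rpow_mul_log_rpow_atTop {p : ℝ} (hp : 0 < p) (q : ℝ) :
    Tendsto (fun x => x ^ p * log x ^ q) atTop atTop := by
  have hlog : Tendsto (fun x => log (x ^ p * log x ^ q)) atTop atTop :=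
    ((tendsto_log_rpow_mul_log_rpow_div_log p q).pos_mul_atTop hp tendsto_log_atTop).congr'
      (by filter_upwards [tendsto_log_atTop.eventually_gt_atTop 0] with x hL
          exact div_mul_cancel₀ _ hL.ne')
  refine (tendsto_exp_atTop.comp hlog).congr' ?_
  filter_upwards [tendsto_log_atTop.eventually_gt_atTop 0, eventually_gt_atTop 0] with x hL hx
  exact exp_log (by positivity)

/-- The exponent `(φ - 1)/θ - ε` is chosen so that the ratio equals `c r ^ φ (log x) ^ (εθ)`,
where `r = log (x ^ (1/θ) (log x) ^ ((φ - 1)/θ - ε)) / log x → 1/θ`. -/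
theorem tendsto_tail_bound_comp_div_log_div_self {θ ε c : ℝ} (hθ : 0 < θ) (hε : 0 < ε)
    (hc : 0 < c) (φ : ℝ) :
    Tendsto (fun x => c * (x ^ (1 / θ) * log x ^ ((φ - 1) / θ - ε)) ^ (-θ) *
      log (x ^ (1 / θ) * log x ^ ((φ - 1) / θ - ε)) ^ φ / (log x / x)) atTop atTop := by
  set s := (φ - 1) / θ - ε
  set r := fun x => log (x ^ (1 / θ) * log x ^ s) / log x
  have hr := tendsto_log_rpow_mul_log_rpow_div_log (1 / θ) s
  have hrφ : Tendsto (fun x => r x ^ φ) atTop (𝓝 ((1 / θ) ^ φ)) :=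
    hr.rpow_const (.inl (by positivity))
  refine ((((tendsto_rpow_atTop (mul_pos hε hθ)).comp tendsto_log_atTop).const_mul_atTop hc
    ).atTop_mul_pos (by positivity) hrφ).congr' ?_
  filter_upwards [tendsto_log_atTop.eventually_gt_atTop 0, eventually_gt_atTop 0,
    hr.eventually (lt_mem_nhds (by positivity : (0:ℝ) < 1 / θ))] with x hL hx hr0
  set L := log x
  have ha : (x ^ (1 / θ) * L ^ s) ^ (-θ) = x⁻¹ * L ^ (-(s * θ)) := by
    rw [mul_rpow (by positivity) (by positivity), ← rpow_mul hx.le, ← rpow_mul hL.le,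
      show 1 / θ * -θ = -1 by field_simp, rpow_neg_one, mul_neg]
  have hloga : log (x ^ (1 / θ) * L ^ s) ^ φ = r x ^ φ * L ^ φ := by
    rw [← mul_rpow hr0.le hL.le, div_mul_cancel₀ _ hL.ne']
  have hexp : -(s * θ) + φ = ε * θ + 1 := by
    simp only [s]; field_simp; ring
  simp only [Function.comp_apply]
  rw [ha, hloga, show c * (x⁻¹ * L ^ (-(s * θ))) * (r x ^ φ * L ^ φ) =
      c * r x ^ φ * L ^ (-(s * θ) + φ) * x⁻¹ by rw [rpow_add hL]; ring, hexp, rpow_add hL,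
    rpow_one]
  field_simp
  ring

end Real

section Probability

variable {Ω ι β : Type*} {mΩ : MeasurableSpace Ω} {μ : Measure Ω} [MeasurableSpace β]
  {X : ι → Ω → β} {j : ι}

theorem ProbabilityTheory.iIndepFun.measureReal_biInter_preimage_eq_pow (hX : iIndepFun X μ)
    (hident : ∀ i, IdentDistrib (X i) (X j) μ μ) (s : Finset ι) {B : Set β}
    (hB : MeasurableSet B) :
    μ.real (⋂ i ∈ s, X i ⁻¹' B) = μ.real (X j ⁻¹' B) ^ s.card := by
  rw [measureReal_def, hX.meas_biInter fun i _ => ⟨B, hB, rfl⟩, ENNReal.toReal_prod,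
    Finset.prod_congr rfl fun i _ => congrArg ENNReal.toReal ((hident i).measure_mem_eq hB),
    Finset.prod_const, measureReal_def]

theorem ProbabilityTheory.iIndepFun.measureReal_biInter_preimage_compl_le_exp
    [IsProbabilityMeasure μ] (hX : iIndepFun X μ)
    (hident : ∀ i, IdentDistrib (X i) (X j) μ μ) (s : Finset ι) {B : Set β}
    (hB : MeasurableSet B) :
    μ.real (⋂ i ∈ s, X i ⁻¹' Bᶜ) ≤ exp (-(s.card * μ.real (X j ⁻¹' B))) := by
  rw [hX.measureReal_biInter_preimage_eq_pow hident s hB.compl, Set.preimage_compl,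
    probReal_compl_eq_one_sub₀ (AEMeasurable.nullMeasurableSet_preimage
      (hident j).aemeasurable_fst hB), neg_mul_eq_mul_neg, exp_nat_mul]
  exact pow_le_pow_left₀ (by simp) (one_sub_le_exp_neg _) _

theorem MeasureTheory.ae_eventually_notMem_of_summable_measureReal [IsFiniteMeasure μ]
    {s : ℕ → Set Ω} (hs : Summable fun n => μ.real (s n)) :
    ∀ᵐ ω ∂μ, ∀ᶠ n in atTop, ω ∉ s n := by
  refine ae_eventually_notMem ?_
  rw [tsum_congr fun n => (ofReal_measureReal (μ := μ) (s := s n)).symm,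
    ← ENNReal.ofReal_tsum_of_nonneg (fun _ => measureReal_nonneg) hs]
  exact ENNReal.ofReal_ne_top

end Probability

theorem iid_sum_lower_bound_general {Ω : Type*} [MeasurableSpace Ω] (μ : Measure Ω)
    [IsProbabilityMeasure μ] (ζ : ℕ → Ω → ℝ)
    (hnonneg : ∀ i ω, 0 ≤ ζ i ω)
    (hindep : iIndepFun ζ μ)
    (hident : ∀ i, IdentDistrib (ζ i) (ζ 1) μ μ)
    (θ φ : ℝ) (hθ : 0 < θ)
    (htail : ∃ c : ℝ, 0 < c ∧ ∀ᶠ x : ℝ in atTop,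
      c * x ^ (-θ) * Real.log x ^ φ ≤ (μ {ω | x ≤ ζ 1 ω}).toReal)
    (ε : ℝ) (hε : 0 < ε) :
    ∀ᵐ ω ∂μ, ∀ᶠ n : ℕ in atTop,
      (n : ℝ) ^ (1 / θ) * Real.log n ^ ((φ - 1) / θ - ε) ≤
        ∑ i ∈ Finset.Icc 1 n, ζ i ω := by
  obtain ⟨c, hc, htail⟩ := htail
  set a : ℕ → ℝ := fun n => (n : ℝ) ^ (1 / θ) * log n ^ ((φ - 1) / θ - ε)
  have hprob : ∀ᶠ n : ℕ in atTop, 2 * log n / n ≤ μ.real (ζ 1 ⁻¹' Set.Ici (a n)) := by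
    filter_upwards [(tendsto_rpow_mul_log_rpow_atTop (p := 1 / θ) (by positivity) _).comp
        tendsto_natCast_atTop_atTop |>.eventually htail,
      (tendsto_tail_bound_comp_div_log_div_self hθ hε hc φ).comp tendsto_natCast_atTop_atTop
        |>.eventually_ge_atTop 2,
      eventually_gt_atTop 1] with n hta hratio hn
    have hL : 0 < log n / n := div_pos (log_pos (by exact_mod_cast hn)) (by positivity)
    rw [mul_div_assoc, ← le_div_iff₀ hL]
    exact hratio.trans (div_le_div_of_nonneg_right hta hL.le)
  have hnone : ∀ᶠ n : ℕ in atTop,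
      μ.real (⋂ i ∈ Finset.Icc 1 n, ζ i ⁻¹' (Set.Ici (a n))ᶜ) ≤ (n : ℝ) ^ (-2 : ℝ) := by
    filter_upwards [hprob, eventually_gt_atTop 0] with n hp hn
    have hn' : (0 : ℝ) < n := by exact_mod_cast hn
    refine (hindep.measureReal_biInter_preimage_compl_le_exp hident _ measurableSet_Ici).trans ?_
    rw [Nat.card_Icc, Nat.add_sub_cancel, rpow_def_of_pos hn']
    gcongr
    rw [div_le_iff₀' hn'] at hp
    linarith
  have hsum : Summable fun n => μ.real (⋂ i ∈ Finset.Icc 1 n, ζ i ⁻¹' (Set.Ici (a n))ᶜ) :=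
    (summable_nat_rpow.2 (by norm_num : (-2 : ℝ) < -1)).of_norm_bounded_eventually_nat
      (by simpa only [norm_of_nonneg measureReal_nonneg] using hnone)
  filter_upwards [ae_eventually_notMem_of_summable_measureReal hsum] with ω hω
  filter_upwards [hω] with n hn
  simp only [Set.mem_iInter, Set.mem_preimage, Set.mem_compl_iff, not_forall, not_not] at hn
  obtain ⟨i, hi, hai⟩ := hn
  exact hai.trans (Finset.single_le_sum (fun j _ => hnonneg j ω) hi)

/-- If `ζ₁, ζ₂, …` are i.i.d. nonnegative random variables with
`P[ζ₁ ≥ x] ≥ c x^{-θ} (log x)^φ` for large `x` (θ > 0, c > 0), then for any `ε > 0`,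
almost surely `∑_{i=1}^n ζᵢ ≥ n^{1/θ} (log n)^{(φ-1)/θ - ε}` for all but
finitely many `n`. -/
theorem iid_sum_lower_bound {Ω : Type*} [MeasurableSpace Ω] (μ : Measure Ω)
    [IsProbabilityMeasure μ] (ζ : ℕ → Ω → ℝ) (hmeas : ∀ i, Measurable (ζ i))
    (hnonneg : ∀ i ω, 0 ≤ ζ i ω)
    (hindep : iIndepFun ζ μ)
    (hident : ∀ i, IdentDistrib (ζ i) (ζ 1) μ μ)
    (θ φ : ℝ) (hθ : 0 < θ)
    (htail : ∃ c : ℝ, 0 < c ∧ ∀ᶠ x : ℝ in atTop,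
      c * x ^ (-θ) * Real.log x ^ φ ≤ (μ {ω | x ≤ ζ 1 ω}).toReal)
    (ε : ℝ) (hε : 0 < ε) :
    ∀ᵐ ω ∂μ, ∀ᶠ n : ℕ in atTop,
      (n : ℝ) ^ (1 / θ) * Real.log n ^ ((φ - 1) / θ - ε) ≤
        ∑ i ∈ Finset.Icc 1 n, ζ i ω :=
  iid_sum_lower_bound_general μ ζ hnonneg hindep hident θ φ hθ htail ε hε
end
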